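/- Let (V,φ) be a finite-dimensional bilinear space, G its isometry group, V_∞ and ⁿ∞V the canonical invariant subspaces with ⁿ∞V = L(V_∞). The map g ↦ φ_g, where φ_g(v,w) = φ((g−1)v, w), sends the pointwise stabilizer G[ⁿ∞V] into the space of bilinear forms on V whose radical contains ⁿ∞V; moreover φ_{gh} = φ_g + φ_h for g, h ∈ G[ⁿ∞V] (i.e. it is a group homomorphism into the additive group of such forms), and its kernel is G[ⁿ∞V] ∩ G[V / R(V) ∩ L(V)] (the elements g with (g−1)V contained in the radical of φ). -/

import Mathlib

variable {F V : Type*} [Field F] [AddCommGroup V] [Module F V]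

/-- Left orthogonal complement of a subspace with respect to a bilinear form. -/
def Lc (φ : V →ₗ[F] V →ₗ[F] F) (U : Submodule F V) : Submodule F V where
  carrier := {v | ∀ u ∈ U, φ v u = 0}
  add_mem' := by
    intro a b ha hb u hu
    simp [map_add, ha u hu, hb u hu]
  zero_mem' := by intro u hu; simp
  smul_mem' := by
    intro c a ha u hu
    simp [ha u hu]

/-- Right orthogonal complement of a subspace with respect to a bilinear form. -/
def Rc (φ : V →ₗ[F] V →ₗ[F] F) (U : Submodule F V) : Submodule F V where
  carrier := {v | ∀ u ∈ U, φ u v = 0}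
  add_mem' := by
    intro a b ha hb u hu
    simp [map_add, ha u hu, hb u hu]
  zero_mem' := by intro u hu; simp
  smul_mem' := by
    intro c a ha u hu
    simp [ha u hu]

/-- The odd alternating iterates `L^{2k+1}(V) = L(R(L(...(V))))`. -/
def Lodd (φ : V →ₗ[F] V →ₗ[F] F) : ℕ → Submodule F V
  | 0 => Lc φ ⊤
  | k + 1 => Lc φ (Rc φ (Lodd φ k))

/-- The odd alternating iterates `R^{2k+1}(V) = R(L(R(...(V))))`. -/
def Rodd (φ : V →ₗ[F] V →ₗ[F] F) : ℕ → Submodule F V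
  | 0 => Rc φ ⊤
  | k + 1 => Rc φ (Lc φ (Rodd φ k))

/-- `V_∞ = L_∞(V) + R_∞(V)`. -/
def Vinf (φ : V →ₗ[F] V →ₗ[F] F) : Submodule F V :=
  (⨆ k, Lodd φ k) ⊔ (⨆ k, Rodd φ k)

/-- `g` is an isometry of the bilinear space `(V, φ)`. -/
def IsIsom (φ : V →ₗ[F] V →ₗ[F] F) (g : V ≃ₗ[F] V) : Prop :=
  ∀ v w : V, φ (g v) (g w) = φ v w

/-!
The alternating iterates collapse at the first step, since `R(L(V)) = V` and `L(R(V)) = V`;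
hence `V_∞` is the sum of the left and the right radical. An isometry `g` fixing a subspace
`U` pointwise satisfies `φ((g-1)v, u) = φ(gv, gu) - φ(v, u) = 0` for `u ∈ U`. Applied to the
left radical (which lies in `ⁿ∞V`) this gives `(g-1)V ⊆ ⁿ∞V`, so any `g ∈ G[ⁿ∞V]` fixes
`(h-1)v`, which is additivity. For the kernel, `φ(gu, (g-1)v) = -φ((g-1)u, v)` shows that
`(g-1)V` lies in the left radical exactly when it lies in the right one.
-/

section Radicals

variable (φ : V →ₗ[F] V →ₗ[F] F)

lemma Lc_antitone : Antitone (Lc φ) :=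
  fun _ _ hUU' _ hv u hu => hv u (hUU' hu)

lemma Lc_sup (U U' : Submodule F V) : Lc φ (U ⊔ U') = Lc φ U ⊓ Lc φ U' := by
  refine le_antisymm (le_inf (Lc_antitone φ le_sup_left) (Lc_antitone φ le_sup_right)) ?_
  rintro v ⟨hU, hU'⟩ u hu
  obtain ⟨x, hx, y, hy, rfl⟩ := Submodule.mem_sup.mp hu
  rw [map_add, hU x hx, hU' y hy, add_zero]

lemma Rc_Lc_top : Rc φ (Lc φ ⊤) = ⊤ :=
  eq_top_iff.mpr fun v _ _ hu => hu v trivial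

lemma Lc_Rc_top : Lc φ (Rc φ ⊤) = ⊤ :=
  eq_top_iff.mpr fun v _ _ hu => hu v trivial

lemma Lodd_eq_Lc_top (k : ℕ) : Lodd φ k = Lc φ ⊤ := by
  induction k with
  | zero => rfl
  | succ k ih => rw [Lodd, ih, Rc_Lc_top]

lemma Rodd_eq_Rc_top (k : ℕ) : Rodd φ k = Rc φ ⊤ := by
  induction k with
  | zero => rfl
  | succ k ih => rw [Rodd, ih, Lc_Rc_top]

lemma Vinf_eq_Lc_top_sup_Rc_top : Vinf φ = Lc φ ⊤ ⊔ Rc φ ⊤ := by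
  simp only [Vinf, Lodd_eq_Lc_top, Rodd_eq_Rc_top, ciSup_const]

end Radicals

namespace IsIsom

variable {φ : V →ₗ[F] V →ₗ[F] F} {g : V ≃ₗ[F] V}

lemma sub_mem_Lc_of_forall_mem_eq (hg : IsIsom φ g) {U : Submodule F V}
    (hfix : ∀ u ∈ U, g u = u) (v : V) : g v - v ∈ Lc φ U := by
  intro u hu
  rw [map_sub, LinearMap.sub_apply, ← hg v u, hfix u hu, sub_self]

lemma sub_mem_Lc_Vinf (hg : IsIsom φ g) (hfix : ∀ u ∈ Lc φ (Vinf φ), g u = u) (v : V) :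
    g v - v ∈ Lc φ (Vinf φ) := by
  have hfix_Lc_top : ∀ u ∈ Lc φ ⊤, g u = u :=
    fun u hu => hfix u (Lc_antitone φ le_top hu)
  rw [Vinf_eq_Lc_top_sup_Rc_top, Lc_sup, Lc_Rc_top, inf_top_eq]
  exact hg.sub_mem_Lc_of_forall_mem_eq hfix_Lc_top v

lemma apply_sub_right (hg : IsIsom φ g) (u v : V) :
    φ (g u) (g v - v) = -φ (g u - u) v := by
  rw [map_sub, hg, map_sub, LinearMap.sub_apply]
  ring

end IsIsom

lemma LinearEquiv.apply_apply_sub_eq_add {g h : V ≃ₗ[F] V} {v : V}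
    (hfix : g (h v - v) = h v - v) : g (h v) - v = (g v - v) + (h v - v) := by
  rw [← hfix, map_sub]
  abel

theorem form_map_on_stabilizer_of_upper_infinity_general
    (φ : V →ₗ[F] V →ₗ[F] F) :
    (∀ g : V ≃ₗ[F] V, IsIsom φ g → (∀ v ∈ Lc φ (Vinf φ), g v = v) →
      ∀ v : V, ∀ w ∈ Lc φ (Vinf φ),
        φ (g v - v) w = 0 ∧ φ (g w - w) v = 0) ∧
    (∀ g h : V ≃ₗ[F] V, IsIsom φ g → (∀ v ∈ Lc φ (Vinf φ), g v = v) →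
      IsIsom φ h → (∀ v ∈ Lc φ (Vinf φ), h v = v) →
      ∀ v w : V, φ (g (h v) - v) w = φ (g v - v) w + φ (h v - v) w) ∧
    (∀ g : V ≃ₗ[F] V, IsIsom φ g → (∀ v ∈ Lc φ (Vinf φ), g v = v) →
      ((∀ v w : V, φ (g v - v) w = 0) ↔
        ∀ v : V, (∀ w : V, φ (g v - v) w = 0) ∧ ∀ w : V, φ w (g v - v) = 0)) := by
  refine ⟨?radical, ?additive, ?kernel⟩
  case radical =>
    intro g hg hfix v w hw
    exact ⟨hg.sub_mem_Lc_of_forall_mem_eq hfix v w hw, by simp [hfix w hw]⟩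
  case additive =>
    intro g h _ hgfix hh hhfix v w
    have hsum := LinearEquiv.apply_apply_sub_eq_add (hgfix _ (hh.sub_mem_Lc_Vinf hhfix v))
    rw [hsum, map_add, LinearMap.add_apply]
  case kernel =>
    intro g hg _
    refine ⟨fun H v => ⟨H v, fun w => ?_⟩, fun H v => (H v).1⟩
    rw [← g.apply_symm_apply w, hg.apply_sub_right, H, neg_zero]

theorem form_map_on_stabilizer_of_upper_infinity
    [FiniteDimensional F V] (φ : V →ₗ[F] V →ₗ[F] F) :
    (∀ g : V ≃ₗ[F] V, IsIsom φ g → (∀ v ∈ Lc φ (Vinf φ), g v = v) →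
      ∀ v : V, ∀ w ∈ Lc φ (Vinf φ),
        φ (g v - v) w = 0 ∧ φ (g w - w) v = 0) ∧
    (∀ g h : V ≃ₗ[F] V, IsIsom φ g → (∀ v ∈ Lc φ (Vinf φ), g v = v) →
      IsIsom φ h → (∀ v ∈ Lc φ (Vinf φ), h v = v) →
      ∀ v w : V, φ (g (h v) - v) w = φ (g v - v) w + φ (h v - v) w) ∧
    (∀ g : V ≃ₗ[F] V, IsIsom φ g → (∀ v ∈ Lc φ (Vinf φ), g v = v) →
      ((∀ v w : V, φ (g v - v) w = 0) ↔
        ∀ v : V, (∀ w : V, φ (g v - v) w = 0) ∧ ∀ w : V, φ w (g v - v) = 0)) :=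
  form_map_on_stabilizer_of_upper_infinity_general φ
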